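/- Let Λ be a CPTP map with Λ[ρ] and Λ[ρ'] pure, and suppose tr_aux Λ gives outputs in the original space with partial traces. Then the deviation from faithfulness δ = η‖ρ − tr_aux Λ[ρ]‖_tr + η'‖ρ' − tr_aux Λ[ρ']‖_tr satisfies δ ≥ η (‖ρ − ρ'‖_tr − D(ρ,ρ')), where η ≤ η' are the a priori probabilities with η + η' = 1. -/

import Mathlib

open Matrix Kronecker BigOperators
open scoped ComplexOrder

/-- The positive semidefinite square root (as in the older Mathlib's `Matrix.PosSemidef.sqrt`). -/
noncomputable def Matrix.PosSemidef.sqrt {m 𝕜 : Type*} [Fintype m] [DecidableEq m] [RCLike 𝕜]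
    {A : Matrix m m 𝕜} (hA : A.PosSemidef) : Matrix m m 𝕜 :=
  hA.1.eigenvectorUnitary.1 * Matrix.diagonal ((↑) ∘ (fun x : ℝ => √x) ∘ hA.1.eigenvalues) *
    (star hA.1.eigenvectorUnitary : Matrix m m 𝕜)

/-- Trace distance/norm with factor 1/2: `‖A‖ = ½ tr √(AᴴA)`. -/
noncomputable def trNorm {m : Type*} [Fintype m] [DecidableEq m] (A : Matrix m m ℂ) : ℝ :=
  (1 / 2) * ((Matrix.posSemidef_conjTranspose_mul_self A).sqrt.trace).re

/-- A density operator: positive semidefinite with unit trace. -/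
def IsDensity {m : Type*} [Fintype m] (ρ : Matrix m m ℂ) : Prop :=
  ρ.PosSemidef ∧ ρ.trace = 1

/-- A pure state: a density operator that is a (rank-one) projector. -/
def IsPureState {m : Type*} [Fintype m] (ρ : Matrix m m ℂ) : Prop :=
  IsDensity ρ ∧ ρ * ρ = ρ

/-- Completely positive trace-preserving map, via a Kraus representation. -/
def IsCPTP {m p : Type*} [Fintype m] [DecidableEq m] [Fintype p]
    (Λ : Matrix m m ℂ →ₗ[ℂ] Matrix p p ℂ) : Prop :=
  ∃ (ι : Type) (s : Finset ι) (K : ι → Matrix p m ℂ),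
    (∀ ρ, Λ ρ = ∑ i ∈ s, K i * ρ * (K i)ᴴ) ∧ ∑ i ∈ s, (K i)ᴴ * K i = 1

/-- Partial trace over the second (auxiliary) tensor factor. -/
noncomputable def ptraceB {m b : Type*} [Fintype b] (ρ : Matrix (m × b) (m × b) ℂ) :
    Matrix m m ℂ :=
  Matrix.of fun i j => ∑ k : b, ρ (i, k) (j, k)

/-- The projector `|χ⟩⟨χ|` onto the vector `χ`. -/
noncomputable def pureProj {m : Type*} (χ : m → ℂ) : Matrix m m ℂ :=
  Matrix.vecMulVec χ (star χ)

/-- `χ` lies in the range of `ρ`. -/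
def inRange {m : Type*} [Fintype m] (ρ : Matrix m m ℂ) (χ : m → ℂ) : Prop :=
  ∃ v, ρ *ᵥ v = χ

/-- Worst-case distinguishability: infimum of trace distances of pure states
taken from the ranges of `ρ` and `ρ'`. -/
noncomputable def wcd {m : Type*} [Fintype m] [DecidableEq m] (ρ ρ' : Matrix m m ℂ) : ℝ :=
  sInf { d : ℝ | ∃ χ χ' : m → ℂ, inRange ρ χ ∧ inRange ρ' χ' ∧
    star χ ⬝ᵥ χ = 1 ∧ star χ' ⬝ᵥ χ' = 1 ∧ d = trNorm (pureProj χ - pureProj χ') }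

/-!
With `σ = tr_aux Λ[ρ]` and `σ' = tr_aux Λ[ρ']`, the triangle inequality gives
`‖ρ - ρ'‖ ≤ ‖ρ - σ‖ + ‖σ - σ'‖ + ‖σ' - ρ'‖`, and `η ≤ η'` turns this into the weighted bound once
`‖σ - σ'‖ ≤ D(ρ, ρ')`. For the latter: a unit vector `χ` in the range of `ρ` satisfies
`|χ⟩⟨χ| ≤ c ρ` (Cauchy–Schwarz), so `Λ[|χ⟩⟨χ|]` is a density matrix dominated by a multiple of the
pure state `Λ[ρ]`, hence equal to it. Thus `σ - σ'` is the image of `|χ⟩⟨χ| - |χ'⟩⟨χ'|` under the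
positive trace-preserving map `tr_aux ∘ Λ`, which contracts the trace norm.

Both the triangle inequality and contractivity reduce to `tr (A - B)⁺ ≤ tr A` for `A, B ≥ 0`.
-/

open scoped MatrixOrder

section TraceNorm

variable {m : Type*} [Fintype m]

lemma re_trace_nonneg {A : Matrix m m ℂ} (hA : 0 ≤ A) : 0 ≤ A.trace.re :=
  (Complex.nonneg_iff.mp hA.posSemidef.trace_nonneg).1

variable [DecidableEq m]

lemma Matrix.PosSemidef.sqrt_eq_cfcSqrt {A : Matrix m m ℂ} (hA : A.PosSemidef) :
    hA.sqrt = CFC.sqrt A := by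
  rw [CFC.sqrt_eq_real_sqrt A hA.nonneg, cfcₙ_eq_cfc, hA.1.cfc_eq, Matrix.IsHermitian.cfc,
    Unitary.conjStarAlgAut_apply]
  rfl

lemma trNorm_eq_re_trace_abs (A : Matrix m m ℂ) : trNorm A = 1 / 2 * (CFC.abs A).trace.re := by
  rw [trNorm, Matrix.PosSemidef.sqrt_eq_cfcSqrt]
  rfl

lemma trNorm_nonneg (A : Matrix m m ℂ) : 0 ≤ trNorm A := by
  rw [trNorm_eq_re_trace_abs]
  exact mul_nonneg (by norm_num) (re_trace_nonneg (CFC.abs_nonneg A))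

lemma trNorm_sub_comm (A B : Matrix m m ℂ) : trNorm (A - B) = trNorm (B - A) := by
  rw [trNorm_eq_re_trace_abs, trNorm_eq_re_trace_abs, ← neg_sub, CFC.abs_neg]

lemma trNorm_eq_of_isSelfAdjoint {X : Matrix m m ℂ} (hX : IsSelfAdjoint X) :
    trNorm X = 1 / 2 * (X⁺.trace.re + X⁻.trace.re) := by
  rw [trNorm_eq_re_trace_abs, ← CFC.posPart_add_negPart X, Matrix.trace_add, Complex.add_re]

lemma re_trace_mul_nonneg {P A : Matrix m m ℂ} (hP : 0 ≤ P) (hA : 0 ≤ A) :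
    0 ≤ (P * A).trace.re := by
  have hSAS : 0 ≤ CFC.sqrt P * A * CFC.sqrt P :=
    (IsSelfAdjoint.of_nonneg (CFC.sqrt_nonneg P)).conjugate_nonneg hA
  rw [← CFC.sqrt_mul_sqrt_self P, mul_assoc, Matrix.trace_mul_comm]
  exact re_trace_nonneg hSAS

-- With `Q` the spectral projection of `A - B` onto its positive part,
-- `tr (A - B)⁺ = tr (Q A) - tr (Q B) ≤ tr (Q A) ≤ tr A` because `0 ≤ Q ≤ 1`.
lemma re_trace_posPart_sub_le {A B : Matrix m m ℂ} (hA : 0 ≤ A) (hB : 0 ≤ B) :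
    (A - B)⁺.trace.re ≤ A.trace.re := by
  set X := A - B
  set f : ℝ → ℝ := fun x => if 0 < x then 1 else 0
  -- `f` is discontinuous; this discharges the continuity side goals of the `cfc` lemmas below.
  have hf : ContinuousOn f (spectrum ℝ X) := X.finite_real_spectrum.continuousOn f
  set Q := cfc f X
  have hQX : Q * X = X⁺ := by
    rw [CFC.posPart_def, cfcₙ_eq_cfc]
    conv_lhs => rw [← cfc_id' ℝ X]
    rw [← cfc_mul f _ X]
    refine cfc_congr fun x _ => ?_
    by_cases hx : 0 < x
    · simp [f, hx, hx.le]
    · simp [f, hx, posPart_eq_zero.mpr (not_lt.mp hx)]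
  have hQ : 0 ≤ Q := cfc_nonneg fun x _ => by positivity
  have hQ1 : 0 ≤ 1 - Q := sub_nonneg.mpr <| cfc_le_one f X fun x _ => by
    by_cases hx : 0 < x <;> simp [f, hx]
  have hQB := re_trace_mul_nonneg hQ hB
  have hQA := re_trace_mul_nonneg hQ1 hA
  rw [sub_mul, one_mul, Matrix.trace_sub, Complex.sub_re] at hQA
  rw [← hQX, mul_sub, Matrix.trace_sub, Complex.sub_re]
  linarith

lemma trNorm_sub_le {A B : Matrix m m ℂ} (hA : 0 ≤ A) (hB : 0 ≤ B) :
    trNorm (A - B) ≤ 1 / 2 * (A.trace.re + B.trace.re) := by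
  have hX : IsSelfAdjoint (A - B) := (IsSelfAdjoint.of_nonneg hA).sub (IsSelfAdjoint.of_nonneg hB)
  have hpos := re_trace_posPart_sub_le hA hB
  have hneg := congrArg (fun M => M.trace.re) (CFC.posPart_sub_negPart (A - B))
  simp only [Matrix.trace_sub, Complex.sub_re] at hneg
  rw [trNorm_eq_of_isSelfAdjoint hX]
  linarith

lemma trNorm_add_le {X Y : Matrix m m ℂ} (hX : IsSelfAdjoint X) (hY : IsSelfAdjoint Y) :
    trNorm (X + Y) ≤ trNorm X + trNorm Y := by
  have hdecomp : X + Y = (X⁺ + Y⁺) - (X⁻ + Y⁻) := calc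
    X + Y = (X⁺ - X⁻) + (Y⁺ - Y⁻) := by
      rw [CFC.posPart_sub_negPart X, CFC.posPart_sub_negPart Y]
    _ = (X⁺ + Y⁺) - (X⁻ + Y⁻) := by abel
  rw [hdecomp, trNorm_eq_of_isSelfAdjoint hX, trNorm_eq_of_isSelfAdjoint hY]
  refine (trNorm_sub_le (add_nonneg (CFC.posPart_nonneg X) (CFC.posPart_nonneg Y))
    (add_nonneg (CFC.negPart_nonneg X) (CFC.negPart_nonneg Y))).trans_eq ?_
  simp only [Matrix.trace_add, Complex.add_re]
  ring

lemma trNorm_sub_le_trNorm_sub_add_trNorm_sub {A B C : Matrix m m ℂ} (hA : IsSelfAdjoint A)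
    (hB : IsSelfAdjoint B) (hC : IsSelfAdjoint C) :
    trNorm (A - C) ≤ trNorm (A - B) + trNorm (B - C) := by
  simpa using trNorm_add_le (hA.sub hB) (hB.sub hC)

lemma trNorm_map_le {p : Type*} [Fintype p] [DecidableEq p]
    (Φ : Matrix m m ℂ →ₗ[ℂ] Matrix p p ℂ) (hΦ : ∀ A, 0 ≤ A → 0 ≤ Φ A)
    (htr : ∀ A, (Φ A).trace = A.trace) {X : Matrix m m ℂ} (hX : IsSelfAdjoint X) :
    trNorm (Φ X) ≤ trNorm X := by
  rw [trNorm_eq_of_isSelfAdjoint hX, ← htr X⁺, ← htr X⁻]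
  conv_lhs => rw [← CFC.posPart_sub_negPart X, map_sub]
  exact trNorm_sub_le (hΦ _ (CFC.posPart_nonneg X)) (hΦ _ (CFC.negPart_nonneg X))

end TraceNorm

section Channels

variable {m p : Type*} [Fintype m] [DecidableEq m] [Fintype p]

lemma IsCPTP.map_nonneg {Λ : Matrix m m ℂ →ₗ[ℂ] Matrix p p ℂ} (hΛ : IsCPTP Λ)
    {A : Matrix m m ℂ} (hA : 0 ≤ A) : 0 ≤ Λ A := by
  obtain ⟨ι, s, K, hK, -⟩ := hΛ
  rw [hK]
  exact Finset.sum_nonneg fun i _ => (hA.posSemidef.mul_mul_conjTranspose_same (K i)).nonneg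

lemma IsCPTP.monotone {Λ : Matrix m m ℂ →ₗ[ℂ] Matrix p p ℂ} (hΛ : IsCPTP Λ) : Monotone Λ :=
  fun A B hAB => sub_nonneg.mp (map_sub Λ B A ▸ hΛ.map_nonneg (sub_nonneg.mpr hAB))

lemma IsCPTP.trace_map {Λ : Matrix m m ℂ →ₗ[ℂ] Matrix p p ℂ} (hΛ : IsCPTP Λ)
    (A : Matrix m m ℂ) : (Λ A).trace = A.trace := by
  obtain ⟨ι, s, K, hK, hTP⟩ := hΛ
  simp_rw [hK, Matrix.trace_sum, Matrix.trace_mul_cycle _ A, ← Matrix.trace_sum,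
    ← Finset.sum_mul, hTP, one_mul]

end Channels

section PartialTrace

variable {m b : Type*} [Fintype b]

noncomputable def ptraceBLinearMap : Matrix (m × b) (m × b) ℂ →ₗ[ℂ] Matrix m m ℂ where
  toFun := ptraceB
  map_add' X Y := by ext i j; simp [ptraceB, Finset.sum_add_distrib]
  map_smul' c X := by ext i j; simp [ptraceB, Finset.mul_sum]

lemma ptraceB_eq_sum_submatrix (X : Matrix (m × b) (m × b) ℂ) :
    ptraceB X = ∑ k, X.submatrix (·, k) (·, k) := by
  ext i j
  simp [ptraceB, Matrix.sum_apply]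

lemma ptraceB_nonneg [Fintype m] {X : Matrix (m × b) (m × b) ℂ} (hX : 0 ≤ X) : 0 ≤ ptraceB X := by
  rw [ptraceB_eq_sum_submatrix]
  exact Finset.sum_nonneg fun k _ => (hX.posSemidef.submatrix _).nonneg

lemma trace_ptraceB [Fintype m] (X : Matrix (m × b) (m × b) ℂ) : (ptraceB X).trace = X.trace := by
  simp only [Matrix.trace, Matrix.diag, ptraceB, Matrix.of_apply]
  exact (Fintype.sum_prod_type' _).symm

end PartialTrace

section PureStates

variable {m : Type*}

lemma pureProj_smul (c : ℂ) (u : m → ℂ) : pureProj (c • u) = (c * star c) • pureProj u := by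
  rw [pureProj, pureProj, star_smul, Matrix.smul_vecMulVec, Matrix.vecMulVec_smul, smul_smul]

lemma pureProj_mulVec {n : Type*} [Fintype n] (M : Matrix m n ℂ) (y : n → ℂ) :
    pureProj (M *ᵥ y) = M * pureProj y * Mᴴ := by
  rw [pureProj, pureProj, Matrix.mul_vecMulVec, Matrix.vecMulVec_mul, Matrix.star_mulVec]

variable [Fintype m]

lemma pureProj_nonneg (u : m → ℂ) : 0 ≤ pureProj u :=
  (Matrix.posSemidef_vecMulVec_self_star u).nonneg

lemma trace_pureProj (u : m → ℂ) : (pureProj u).trace = star u ⬝ᵥ u := by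
  rw [pureProj, Matrix.trace_vecMulVec, dotProduct_comm]

lemma pureProj_mul_mul_pureProj (u : m → ℂ) (M : Matrix m m ℂ) :
    pureProj u * M * pureProj u = (star u ⬝ᵥ M *ᵥ u) • pureProj u := by
  rw [pureProj, Matrix.vecMulVec_mul, Matrix.vecMulVec_mul_vecMulVec, Matrix.vecMulVec_smul,
    Matrix.dotProduct_mulVec]

lemma star_dotProduct_self_eq_norm_sq (y : m → ℂ) :
    star y ⬝ᵥ y = ((‖(WithLp.toLp 2 y : EuclideanSpace ℂ m)‖ ^ 2 : ℝ) : ℂ) := by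
  have h := inner_self_eq_norm_sq_to_K (𝕜 := ℂ) (WithLp.toLp 2 y : EuclideanSpace ℂ m)
  rw [EuclideanSpace.inner_toLp_toLp] at h
  rw [dotProduct_comm, h]
  push_cast
  rfl

lemma exists_smul_unit {w : m → ℂ} (hw : w ≠ 0) : ∃ c : ℂ, star (c • w) ⬝ᵥ (c • w) = 1 := by
  have hpos : 0 < ‖(WithLp.toLp 2 w : EuclideanSpace ℂ m)‖ := by simpa using hw
  refine ⟨((‖(WithLp.toLp 2 w : EuclideanSpace ℂ m)‖⁻¹ : ℝ) : ℂ), ?_⟩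
  rw [star_smul, smul_dotProduct, dotProduct_smul, star_dotProduct_self_eq_norm_sq,
    Complex.star_def, Complex.conj_ofReal, smul_eq_mul, smul_eq_mul, ← Complex.ofReal_mul,
    ← Complex.ofReal_mul, ← Complex.ofReal_one, Complex.ofReal_inj]
  field_simp

lemma IsDensity.ne_zero {ρ : Matrix m m ℂ} (hρ : IsDensity ρ) : ρ ≠ 0 := fun h0 => by
  simpa [h0] using hρ.2

lemma exists_inRange_unit {ρ : Matrix m m ℂ} (hρ : ρ ≠ 0) :
    ∃ χ, inRange ρ χ ∧ star χ ⬝ᵥ χ = 1 := by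
  obtain ⟨v, hv⟩ : ∃ v, ρ *ᵥ v ≠ 0 := by
    by_contra! h
    exact hρ (Matrix.ext_iff_mulVec.mpr fun v => by rw [h v, Matrix.zero_mulVec])
  obtain ⟨c, hc⟩ := exists_smul_unit hv
  exact ⟨c • ρ *ᵥ v, ⟨c • v, Matrix.mulVec_smul ρ c v⟩, hc⟩

lemma pureProj_le_smul_one [DecidableEq m] (y : m → ℂ) :
    pureProj y ≤ (star y ⬝ᵥ y) • (1 : Matrix m m ℂ) := by
  rw [Matrix.le_iff]
  refine Matrix.PosSemidef.of_dotProduct_mulVec_nonneg ?_ fun w => ?_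
  · simp [pureProj, star_dotProduct_self_eq_norm_sq y, Matrix.IsHermitian,
      Matrix.conjTranspose_sub]
  set x : EuclideanSpace ℂ m := WithLp.toLp 2 y
  set z : EuclideanSpace ℂ m := WithLp.toLp 2 w
  have hyw : star y ⬝ᵥ w = inner ℂ x z := dotProduct_comm _ _
  have hwy : star w ⬝ᵥ y = star (inner ℂ x z) := by rw [← hyw, star_dotProduct]
  have hcs : ‖inner ℂ x z‖ ^ 2 ≤ ‖x‖ ^ 2 * ‖z‖ ^ 2 := by
    rw [← mul_pow]; exact pow_le_pow_left₀ (norm_nonneg _) (norm_inner_le_norm x z) 2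
  have hquad : star w ⬝ᵥ (((star y ⬝ᵥ y) • 1 - pureProj y) *ᵥ w)
      = ((‖x‖ ^ 2 * ‖z‖ ^ 2 - ‖inner ℂ x z‖ ^ 2 : ℝ) : ℂ) := by
    rw [Matrix.sub_mulVec, Matrix.smul_mulVec, Matrix.one_mulVec, pureProj,
      Matrix.vecMulVec_mulVec, dotProduct_sub, dotProduct_smul, dotProduct_smul,
      star_dotProduct_self_eq_norm_sq y, star_dotProduct_self_eq_norm_sq w, hyw, hwy,
      MulOpposite.smul_eq_mul_unop, MulOpposite.unop_op, smul_eq_mul, Complex.star_def,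
      Complex.conj_mul']
    push_cast
    rfl
  rw [hquad]
  exact Complex.zero_le_real.mpr (sub_nonneg.mpr hcs)

-- Conjugate `pureProj y ≤ ‖y‖² • 1` by `S = √ρ`, with `y = S v`.
lemma pureProj_mulVec_le_smul [DecidableEq m] {ρ : Matrix m m ℂ} (hρ : 0 ≤ ρ) (v : m → ℂ) :
    pureProj (ρ *ᵥ v) ≤ (star v ⬝ᵥ ρ *ᵥ v) • ρ := by
  set S := CFC.sqrt ρ
  have hS : Sᴴ = S := (IsSelfAdjoint.of_nonneg (CFC.sqrt_nonneg ρ)).star_eq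
  have hSS : S * S = ρ := CFC.sqrt_mul_sqrt_self ρ
  have hρv : ρ *ᵥ v = S *ᵥ (S *ᵥ v) := by rw [Matrix.mulVec_mulVec, hSS]
  have hc : star v ⬝ᵥ ρ *ᵥ v = star (S *ᵥ v) ⬝ᵥ (S *ᵥ v) := by
    rw [hρv, Matrix.dotProduct_mulVec, Matrix.star_mulVec, hS]
  have hρ' : (star v ⬝ᵥ ρ *ᵥ v) • ρ = S * ((star v ⬝ᵥ ρ *ᵥ v) • 1) * Sᴴ := by
    rw [hS, Matrix.mul_smul, Matrix.mul_one, Matrix.smul_mul, hSS]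
  rw [hρ', hc, hρv, pureProj_mulVec]
  exact star_right_conjugate_le_conjugate (pureProj_le_smul_one _) S

-- The column `w = P e_j` satisfies `pureProj w ≤ P j j • P`, and both sides have trace `P j j`.
lemma IsPureState.exists_eq_pureProj [DecidableEq m] {P : Matrix m m ℂ} (hP : IsPureState P) :
    ∃ u, P = pureProj u := by
  obtain ⟨⟨hpsd, htr⟩, hidem⟩ := hP
  obtain ⟨j, hj⟩ : ∃ j, P j j ≠ 0 := by
    by_contra! h
    simp [Matrix.trace, h] at htr
  set e : m → ℂ := Pi.single j 1
  set w := P *ᵥ e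
  have hPjj : star e ⬝ᵥ P *ᵥ e = P j j := by simp [e]
  have hww : star w ⬝ᵥ w = P j j := by
    rw [Matrix.star_mulVec, ← Matrix.dotProduct_mulVec, Matrix.mulVec_mulVec,
      hpsd.isHermitian.eq, hidem, hPjj]
  have hjP : P j j • P = pureProj w := by
    have hle := Matrix.le_iff.mp (pureProj_mulVec_le_smul hpsd.nonneg e)
    rw [hPjj] at hle
    refine sub_eq_zero.mp (hle.trace_eq_zero_iff.mp ?_)
    rw [Matrix.trace_sub, Matrix.trace_smul, htr, trace_pureProj, hww, smul_eq_mul, mul_one,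
      sub_self]
  obtain ⟨c, hc⟩ := exists_smul_unit (w := w) fun h => hj (by rw [← hww, h, dotProduct_zero])
  refine ⟨c • w, ?_⟩
  rw [star_smul, smul_dotProduct, dotProduct_smul, hww, smul_eq_mul, smul_eq_mul] at hc
  rw [pureProj_smul, ← hjP, smul_smul, mul_comm c, mul_assoc, hc, one_smul]

-- `M` vanishes on the orthogonal complement of `u`, so `M = P M P` for `P = pureProj u`.
lemma eq_pureProj_of_le_smul {M : Matrix m m ℂ} {u : m → ℂ} {c : ℂ} (hM : 0 ≤ M)
    (htr : M.trace = 1) (hu : star u ⬝ᵥ u = 1) (hle : M ≤ c • pureProj u) :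
    M = pureProj u := by
  have hker : ∀ w, star u ⬝ᵥ w = 0 → M *ᵥ w = 0 := by
    intro w hw
    have h1 := (Matrix.le_iff.mp hle).dotProduct_mulVec_nonneg w
    rw [Matrix.sub_mulVec, Matrix.smul_mulVec, pureProj, Matrix.vecMulVec_mulVec, hw] at h1
    simp only [MulOpposite.op_zero, zero_smul, smul_zero, zero_sub, dotProduct_neg,
      Left.nonneg_neg_iff] at h1
    exact (hM.posSemidef.dotProduct_mulVec_zero_iff w).mp
      (le_antisymm h1 (hM.posSemidef.dotProduct_mulVec_nonneg w))
  have hMP : M * pureProj u = M := by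
    refine Matrix.ext_iff_mulVec.mpr fun w => ?_
    have h0 : star u ⬝ᵥ (w - pureProj u *ᵥ w) = 0 := by
      rw [pureProj, Matrix.vecMulVec_mulVec, dotProduct_sub, dotProduct_smul, hu,
        MulOpposite.smul_eq_mul_unop, MulOpposite.unop_op, one_mul, sub_self]
    rw [← Matrix.mulVec_mulVec, ← sub_eq_zero, ← Matrix.mulVec_sub, ← neg_sub,
      Matrix.mulVec_neg, hker _ h0, neg_zero]
  have hPM : pureProj u * M = M := by
    simpa [pureProj, hM.posSemidef.isHermitian.eq, Matrix.conjTranspose_mul] using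
      congrArg Matrix.conjTranspose hMP
  have hcoef : M = (star u ⬝ᵥ M *ᵥ u) • pureProj u := by
    rw [← pureProj_mul_mul_pureProj, hPM, hMP]
  have hone : star u ⬝ᵥ M *ᵥ u = 1 := by
    have h := congrArg Matrix.trace hcoef
    rwa [Matrix.trace_smul, trace_pureProj, hu, htr, smul_eq_mul, mul_one, eq_comm] at h
  rw [hcoef, hone, one_smul]

end PureStates

section Faithfulness

variable {m p : Type*} [Fintype m] [DecidableEq m] [Fintype p]

lemma IsCPTP.map_pureProj_eq {Λ : Matrix m m ℂ →ₗ[ℂ] Matrix p p ℂ} (hΛ : IsCPTP Λ)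
    {ρ : Matrix m m ℂ} (hρ : 0 ≤ ρ) (hp : IsPureState (Λ ρ)) {χ : m → ℂ} (hχ : inRange ρ χ)
    (hχ1 : star χ ⬝ᵥ χ = 1) : Λ (pureProj χ) = Λ ρ := by
  classical
  obtain ⟨v, rfl⟩ := hχ
  obtain ⟨u, hu⟩ := hp.exists_eq_pureProj
  have hu1 : star u ⬝ᵥ u = 1 := by rw [← trace_pureProj, ← hu, hp.1.2]
  have hle : Λ (pureProj (ρ *ᵥ v)) ≤ (star v ⬝ᵥ ρ *ᵥ v) • pureProj u := by
    rw [← hu, ← map_smul]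
    exact hΛ.monotone (pureProj_mulVec_le_smul hρ v)
  have htr : (Λ (pureProj (ρ *ᵥ v))).trace = 1 := by rw [hΛ.trace_map, trace_pureProj, hχ1]
  rw [hu]
  exact eq_pureProj_of_le_smul (hΛ.map_nonneg (pureProj_nonneg _)) htr hu1 hle

lemma IsCPTP.trNorm_sub_le_wcd {q : Type*} [Fintype q] [DecidableEq q]
    {Λ : Matrix m m ℂ →ₗ[ℂ] Matrix p p ℂ} (hΛ : IsCPTP Λ)
    (Ψ : Matrix p p ℂ →ₗ[ℂ] Matrix q q ℂ) (hΨ : ∀ A, 0 ≤ A → 0 ≤ Ψ A)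
    (hΨtr : ∀ A, (Ψ A).trace = A.trace) {ρ ρ' : Matrix m m ℂ} (hρ : IsDensity ρ)
    (hρ' : IsDensity ρ') (hp : IsPureState (Λ ρ)) (hp' : IsPureState (Λ ρ')) :
    trNorm (Ψ (Λ ρ) - Ψ (Λ ρ')) ≤ wcd ρ ρ' := by
  obtain ⟨χ₀, hχ₀, hχ₀1⟩ := exists_inRange_unit hρ.ne_zero
  obtain ⟨χ₀', hχ₀', hχ₀1'⟩ := exists_inRange_unit hρ'.ne_zero
  refine le_csInf ⟨_, χ₀, χ₀', hχ₀, hχ₀', hχ₀1, hχ₀1', rfl⟩ ?_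
  rintro _ ⟨χ, χ', hχ, hχ', hχ1, hχ1', rfl⟩
  have hcomp := trNorm_map_le (Ψ ∘ₗ Λ) (fun A hA => hΨ _ (hΛ.map_nonneg hA))
    (fun A => by rw [LinearMap.comp_apply, hΨtr, hΛ.trace_map])
    ((IsSelfAdjoint.of_nonneg (pureProj_nonneg χ)).sub (.of_nonneg (pureProj_nonneg χ')))
  rwa [map_sub, LinearMap.comp_apply, LinearMap.comp_apply,
    hΛ.map_pureProj_eq hρ.1.nonneg hp hχ hχ1,
    hΛ.map_pureProj_eq hρ'.1.nonneg hp' hχ' hχ1'] at hcomp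

end Faithfulness

theorem faithfulness_lower_bound_general {n a : Type*} [Fintype n] [DecidableEq n] [Fintype a]
    (Λ : Matrix n n ℂ →ₗ[ℂ] Matrix (n × a) (n × a) ℂ) (hCPTP : IsCPTP Λ)
    (ρ ρ' : Matrix n n ℂ) (hρ : IsDensity ρ) (hρ' : IsDensity ρ')
    (hp : IsPureState (Λ ρ)) (hp' : IsPureState (Λ ρ'))
    (η η' : ℝ) (hη : 0 ≤ η) (hle : η ≤ η') :
    η * (trNorm (ρ - ρ') - wcd ρ ρ')
      ≤ η * trNorm (ρ - ptraceB (Λ ρ)) + η' * trNorm (ρ' - ptraceB (Λ ρ')) := by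
  set σ := ptraceB (Λ ρ)
  set σ' := ptraceB (Λ ρ')
  have hρs : IsSelfAdjoint ρ := hρ.1.isHermitian
  have hρs' : IsSelfAdjoint ρ' := hρ'.1.isHermitian
  have hσ : IsSelfAdjoint σ := .of_nonneg (ptraceB_nonneg (hCPTP.map_nonneg hρ.1.nonneg))
  have hσ' : IsSelfAdjoint σ' := .of_nonneg (ptraceB_nonneg (hCPTP.map_nonneg hρ'.1.nonneg))
  have hwcd : trNorm (σ - σ') ≤ wcd ρ ρ' :=
    hCPTP.trNorm_sub_le_wcd ptraceBLinearMap (fun _ => ptraceB_nonneg) trace_ptraceB hρ hρ' hp hp'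
  have htri : trNorm (ρ - ρ') ≤ trNorm (ρ - σ) + trNorm (σ - σ') + trNorm (ρ' - σ') := by
    rw [trNorm_sub_comm ρ' σ']
    linarith [trNorm_sub_le_trNorm_sub_add_trNorm_sub hρs hσ hρs',
      trNorm_sub_le_trNorm_sub_add_trNorm_sub hσ hσ' hρs']
  calc η * (trNorm (ρ - ρ') - wcd ρ ρ')
      ≤ η * (trNorm (ρ - σ) + trNorm (ρ' - σ')) := mul_le_mul_of_nonneg_left (by linarith) hη
    _ ≤ η * trNorm (ρ - σ) + η' * trNorm (ρ' - σ') := by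
      rw [mul_add]
      gcongr
      exact trNorm_nonneg _

/-- lower bound on the deviation from perfect faithfulness of a
two-state purifier with pure output:
`δ ≥ η (‖ρ − ρ'‖_tr − D(ρ,ρ'))`. -/
theorem faithfulness_lower_bound {n a : Type*} [Fintype n] [DecidableEq n] [Fintype a]
    (Λ : Matrix n n ℂ →ₗ[ℂ] Matrix (n × a) (n × a) ℂ) (hCPTP : IsCPTP Λ)
    (ρ ρ' : Matrix n n ℂ) (hρ : IsDensity ρ) (hρ' : IsDensity ρ')
    (hp : IsPureState (Λ ρ)) (hp' : IsPureState (Λ ρ'))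
    (η η' : ℝ) (hη : 0 ≤ η) (hle : η ≤ η') (hsum : η + η' = 1) :
    η * (trNorm (ρ - ρ') - wcd ρ ρ')
      ≤ η * trNorm (ρ - ptraceB (Λ ρ)) + η' * trNorm (ρ' - ptraceB (Λ ρ')) :=
  faithfulness_lower_bound_general Λ hCPTP ρ ρ' hρ hρ' hp hp' η η' hη hle
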